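/- arXiv:2302.11973 — 2 statements merged into one kernel-verified Lean document; each statement's English description precedes it below -/
import Mathlib

section
/- Let n ≥ 3 and k ≥ 2 be even, and for 1 ≤ i ≤ n-1 define Qⁿ_{k,i} = Pⁿₖ + ((n-1-i)/((k-1)(k+n-1)))·A₁Pⁿₖ and mⁿ_{k,i} = min over [-1,1] of Qⁿ_{k,i}. Then the sequence (mⁿ_{k,i})_{i=1}^{n-1} is strictly increasing: mⁿ_{k,1} < mⁿ_{k,2} < ⋯ < mⁿ_{k,n-1}. -/
/-- `p` is the Legendre polynomial of dimension `n` and degree `k`: it is a polynomial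
function, normalized by `p 1 = 1`, satisfying the Legendre ODE
`(1-t²)y'' - (n-1)t·y' + k(k+n-2)y = 0`. -/
def IsLegendre (n k : ℕ) (p : ℝ → ℝ) : Prop :=
  (∃ q : Polynomial ℝ, ∀ t, p t = q.eval t) ∧ p 1 = 1 ∧
    ∀ t : ℝ, (1 - t ^ 2) * iteratedDeriv 2 p t - ((n : ℝ) - 1) * t * deriv p t +
      (k : ℝ) * ((k : ℝ) + (n : ℝ) - 2) * p t = 0

/-!
Write `A = P - t P'` and `M c = min_{[-1,1]} (P + c A)`; the claim is that `M` is strictly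
decreasing on `c ≥ 0`. This holds for any continuous `P`, `A` on a compact set once some minimiser
`t₀` of `P` has `A t₀ < 0`: at a minimiser `s` of `P + c A` with `c > 0`, comparing with `t₀` gives
`A s ≤ A t₀ < 0`, so raising `c` strictly lowers the value at `s`.

For the Legendre polynomial such a `t₀` exists. Since `k` is even, `P` is even (its odd part solves
the same equation, hence has degree `k` or vanishes), so `P (±1) = 1`, and the equation at `±1`
gives `(n - 1) A (±1) = n - 1 - k (k + n - 2) < 0`. A minimiser inside `(-1, 1)` is a critical
point, where `A = P`; there `P > 0` would force `P'' < 0`, and `P = 0` would make it a double root,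
which a nonzero solution cannot have off `±1` because derivatives of solutions solve equations of
the same shape.
-/

open Polynomial Set Filter Topology

theorem strictAntiOn_sInf_image_add_mul {α : Type*} [TopologicalSpace α] {S : Set α}
    (hS : IsCompact S) {f g : α → ℝ} (hf : ContinuousOn f S) (hg : ContinuousOn g S) {t₀ : α}
    (ht₀ : t₀ ∈ S) (hmin : IsMinOn f S t₀) (hg₀ : g t₀ < 0) :
    StrictAntiOn (fun c : ℝ => sInf ((fun t => f t + c * g t) '' S)) (Ici 0) := by
  intro c hc c' _ hcc'
  have hcont : ∀ c : ℝ, ContinuousOn (fun t => f t + c * g t) S :=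
    fun c => hf.add (continuousOn_const.mul hg)
  obtain ⟨s, hs, hsmin, hgs⟩ :
      ∃ s ∈ S, IsMinOn (fun t => f t + c * g t) S s ∧ g s < 0 := by
    rcases (mem_Ici.1 hc).eq_or_lt with rfl | hc₀
    · exact ⟨t₀, ht₀, by simpa using hmin, hg₀⟩
    · obtain ⟨s, hs, hsmin⟩ := hS.exists_isMinOn ⟨t₀, ht₀⟩ (hcont c)
      have h₁ : f s + c * g s ≤ f t₀ + c * g t₀ := hsmin ht₀
      have h₂ : f t₀ ≤ f s := hmin hs
      exact ⟨s, hs, hsmin, by nlinarith⟩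
  calc sInf ((fun t => f t + c' * g t) '' S) ≤ f s + c' * g s :=
        csInf_le (hS.image_of_continuousOn (hcont c')).bddBelow (mem_image_of_mem _ hs)
    _ < f s + c * g s := by nlinarith
    _ = sInf ((fun t => f t + c * g t) '' S) :=
        (IsLeast.csInf_eq ⟨mem_image_of_mem (fun t => f t + c * g t) hs,
          forall_mem_image.2 fun _ hx => hsmin hx⟩).symm

namespace Polynomial

noncomputable def legendreOp (ν K : ℝ) (q : ℝ[X]) : ℝ[X] :=
  (1 - X ^ 2) * derivative (derivative q) - C ν * (X * derivative q) + C K * q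

variable {ν K : ℝ} {q : ℝ[X]}

theorem eval_legendreOp (ν K : ℝ) (q : ℝ[X]) (t : ℝ) :
    (legendreOp ν K q).eval t = (1 - t ^ 2) * (derivative (derivative q)).eval t -
      ν * t * (derivative q).eval t + K * q.eval t := by
  simp only [legendreOp, eval_add, eval_sub, eval_mul, eval_one, eval_pow, eval_X, eval_C]
  ring

theorem coeff_X_mul_derivative {R : Type*} [Semiring R] (p : R[X]) (j : ℕ) :
    (X * derivative p).coeff j = p.coeff j * j := by
  cases j with
  | zero => simp
  | succ j => rw [coeff_X_mul, coeff_derivative, Nat.cast_succ]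

theorem coeff_legendreOp (ν K : ℝ) (q : ℝ[X]) (j : ℕ) :
    (legendreOp ν K q).coeff j =
      (derivative (derivative q)).coeff j + (K - j * (j - 1) - ν * j) * q.coeff j := by
  have hX2 : (1 - X ^ 2) * derivative (derivative q) = derivative (derivative q) -
      (X * derivative (X * derivative q) - X * derivative q) := by
    simp only [derivative_mul, derivative_X]
    ring
  rw [legendreOp, hX2]
  simp only [coeff_add, coeff_sub, coeff_C_mul, coeff_X_mul_derivative]
  ring

theorem eigenvalue_eq_of_legendreOp_eq_zero (hq : q ≠ 0) (h : legendreOp ν K q = 0) :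
    K = q.natDegree * (q.natDegree + ν - 1) := by
  have hcoeff := congrArg (coeff · q.natDegree) h
  have htop : q.coeff (q.natDegree + 1 + 1) = 0 := coeff_eq_zero_of_natDegree_lt (by omega)
  simp only [coeff_legendreOp, coeff_derivative, coeff_zero, htop, zero_mul, zero_add] at hcoeff
  have := (mul_eq_zero.1 hcoeff).resolve_right (mt leadingCoeff_eq_zero.1 hq)
  linear_combination this

theorem legendreOp_sub (p r : ℝ[X]) :
    legendreOp ν K (p - r) = legendreOp ν K p - legendreOp ν K r := by
  simp only [legendreOp, derivative_sub]
  ring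

theorem legendreOp_comp_neg_X (q : ℝ[X]) :
    legendreOp ν K (q.comp (-X)) = (legendreOp ν K q).comp (-X) := by
  simp [legendreOp, derivative_comp]

theorem derivative_legendreOp (q : ℝ[X]) :
    derivative (legendreOp ν K q) = legendreOp (ν + 2) (K - ν) (derivative q) := by
  simp only [legendreOp, derivative_mul, derivative_C, derivative_X, derivative_one,
    derivative_X_sq, map_add, map_sub]
  ring

theorem comp_neg_X_eq_self_of_legendreOp_eq_zero {k : ℕ} (hν : 0 < ν) (hk : Even k)
    (h : legendreOp ν (k * (k + ν - 1)) q = 0) : q.comp (-X) = q := by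
  set O := q.comp (-X) - q with hO
  have hLO : legendreOp ν (k * (k + ν - 1)) O = 0 := by
    rw [hO, legendreOp_sub, legendreOp_comp_neg_X, h, zero_comp, sub_zero]
  have hodd : O.comp (-X) = -O := by
    simp [hO, sub_comp, comp_assoc]
  by_contra hne
  have hO0 : O ≠ 0 := sub_ne_zero.2 hne
  have hdeg : O.natDegree = k := by
    have hK := eigenvalue_eq_of_legendreOp_eq_zero hO0 hLO
    by_contra hdk
    have hsum : (1 : ℝ) ≤ O.natDegree + k := by exact_mod_cast (by omega : 1 ≤ O.natDegree + k)
    have hsub : (O.natDegree : ℝ) - k ≠ 0 := sub_ne_zero.2 (by exact_mod_cast hdk)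
    have : ((O.natDegree : ℝ) - k) * (O.natDegree + k + ν - 1) = 0 := by linear_combination -hK
    exact (mul_ne_zero hsub (by linarith)) this
  have hlc := leadingCoeff_comp (p := O) (q := -X) (by simp)
  rw [hodd, hdeg] at hlc
  simp only [leadingCoeff_neg, monic_X.leadingCoeff, hk.neg_one_pow, mul_one] at hlc
  exact hO0 (leadingCoeff_eq_zero.1 (by linarith))

theorem eq_zero_of_legendreOp_eq_zero_of_eval_eq_zero {a : ℝ} (ha : a ^ 2 < 1)
    (h : legendreOp ν K q = 0) (h₀ : q.eval a = 0) (h₁ : (derivative q).eval a = 0) :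
    q = 0 := by
  induction hd : q.natDegree using Nat.strong_induction_on generalizing q ν K with
  | _ d ih =>
  have h₂ : (derivative (derivative q)).eval a = 0 := by
    have hev := congrArg (eval a) h
    rw [eval_legendreOp, h₀, h₁, eval_zero] at hev
    exact (mul_eq_zero.1 (by linarith)).resolve_left (by linarith : (1 : ℝ) - a ^ 2 ≠ 0)
  have hq' : derivative q = 0 := by
    rcases eq_or_ne d 0 with hd0 | hd0
    · exact derivative_eq_zero.2 (hd.trans hd0)
    · exact ih _ (hd ▸ natDegree_derivative_lt (hd ▸ hd0))
        (by rw [← derivative_legendreOp, h, derivative_zero]) h₁ h₂ rfl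
  rw [eq_C_of_derivative_eq_zero hq'] at h₀ ⊢
  simpa using h₀

theorem deriv_eval_eq (p : ℝ[X]) :
    deriv (fun x => p.eval x) = fun x => (derivative p).eval x := by
  ext
  exact p.deriv

theorem eval_neg_of_isLocalMin (hK : 0 < K) (hq : q ≠ 0) (h : legendreOp ν K q = 0) {t : ℝ}
    (ht : t ^ 2 < 1) (hmin : IsLocalMin (fun x => q.eval x) t) : q.eval t < 0 := by
  have hd : (derivative q).eval t = 0 := by simpa using hmin.deriv_eq_zero
  have hode : (1 - t ^ 2) * (derivative (derivative q)).eval t = -K * q.eval t := by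
    have hev := congrArg (eval t) h
    rw [eval_legendreOp, hd, eval_zero] at hev
    linarith
  rcases lt_trichotomy (q.eval t) 0 with hneg | hzero | hpos
  · exact hneg
  · exact absurd (eq_zero_of_legendreOp_eq_zero_of_eval_eq_zero ht h hzero hd) hq
  · -- `q'' t < 0` makes `t` a local maximum too, so `q` is constant near `t` and `q'' t = 0`.
    have hdd : (derivative (derivative q)).eval t < 0 := by nlinarith
    have hmax : IsLocalMax (fun x => q.eval x) t :=
      isLocalMax_of_deriv_deriv_neg (by rwa [deriv_eval_eq, Polynomial.deriv])
        (by simpa using hd) q.continuous.continuousAt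
    have hconst : (fun x => q.eval x) =ᶠ[𝓝 t] fun _ => q.eval t :=
      (hmin.and hmax).mono fun x hx => le_antisymm hx.2 hx.1
    have hdd0 : (derivative (derivative q)).eval t = 0 := by
      simpa [deriv_eval_eq] using hconst.deriv.deriv_eq
    linarith

theorem mul_eval_sub_mul_eval_derivative_of_sq_eq_one (h : legendreOp ν K q = 0) {t : ℝ}
    (ht : t ^ 2 = 1) : ν * (q.eval t - t * (derivative q).eval t) = (ν - K) * q.eval t := by
  have hev := congrArg (eval t) h
  rw [eval_legendreOp, ht, eval_zero] at hev
  linear_combination hev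

theorem exists_isMinOn_eval_sub_mul_eval_derivative_neg {k : ℕ} (hν : 0 < ν) (hke : Even k)
    (hk : 2 ≤ k) (h : legendreOp ν (k * (k + ν - 1)) q = 0) (h₁ : q.eval 1 = 1) :
    ∃ t ∈ Icc (-1 : ℝ) 1, IsMinOn (fun x => q.eval x) (Icc (-1) 1) t ∧
      q.eval t - t * (derivative q).eval t < 0 := by
  have hk' : (2 : ℝ) ≤ k := by exact_mod_cast hk
  have hq_neg_one : q.eval (-1) = 1 := by
    have := congrArg (eval 1) (comp_neg_X_eq_self_of_legendreOp_eq_zero hν hke h)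
    rwa [eval_comp, h₁, eval_neg, eval_X] at this
  obtain ⟨t, ht, hmin⟩ :=
    isCompact_Icc.exists_isMinOn (nonempty_Icc.2 (by norm_num : (-1 : ℝ) ≤ 1))
      q.continuous.continuousOn
  refine ⟨t, ht, hmin, ?_⟩
  rcases eq_endpoints_or_mem_Ioo_of_mem_Icc ht with rfl | rfl | ⟨hlo, hhi⟩
  · have := mul_eval_sub_mul_eval_derivative_of_sq_eq_one h (t := -1) (by norm_num)
    rw [hq_neg_one] at this
    nlinarith
  · have := mul_eval_sub_mul_eval_derivative_of_sq_eq_one h (t := 1) (by norm_num)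
    rw [h₁] at this
    nlinarith
  · have hq : q ≠ 0 := by rintro rfl; simp at h₁
    have hloc := hmin.isLocalMin (Icc_mem_nhds hlo hhi)
    have hd : (derivative q).eval t = 0 := by simpa using hloc.deriv_eq_zero
    rw [hd, mul_zero, sub_zero]
    exact eval_neg_of_isLocalMin (by nlinarith) hq h (by nlinarith) hloc

end Polynomial

theorem IsLegendre.exists_polynomial {n k : ℕ} {P : ℝ → ℝ} (hP : IsLegendre n k P) :
    ∃ q : ℝ[X], P = (fun t => q.eval t) ∧ q.eval 1 = 1 ∧
      legendreOp ((n : ℝ) - 1) (k * (k + ((n : ℝ) - 1) - 1)) q = 0 := by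
  obtain ⟨⟨q, hq⟩, h₁, hode⟩ := hP
  obtain rfl : P = fun t => q.eval t := funext hq
  refine ⟨q, rfl, h₁, Polynomial.funext fun t => ?_⟩
  have := hode t
  rw [iteratedDeriv_succ, iteratedDeriv_one, deriv_eval_eq, deriv_eval_eq] at this
  rw [eval_legendreOp, eval_zero]
  linear_combination this

theorem min_Q_strict_mono_general (n k : ℕ) (hk : 2 ≤ k) (hke : Even k)
    (P : ℝ → ℝ) (hP : IsLegendre n k P) :
    ∀ i : ℕ, 1 ≤ i → i + 1 ≤ n - 1 →
      sInf ((fun t => P t +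
          (((n : ℝ) - 1 - (i : ℝ)) / (((k : ℝ) - 1) * ((k : ℝ) + (n : ℝ) - 1))) *
            (P t - t * deriv P t)) '' Set.Icc (-1 : ℝ) 1) <
        sInf ((fun t => P t +
          (((n : ℝ) - 1 - ((i : ℝ) + 1)) / (((k : ℝ) - 1) * ((k : ℝ) + (n : ℝ) - 1))) *
            (P t - t * deriv P t)) '' Set.Icc (-1 : ℝ) 1) := by
  intro i _ hi
  obtain ⟨q, rfl, h₁, h⟩ := hP.exists_polynomial
  have hin : (i : ℝ) + 2 ≤ n := by exact_mod_cast (by omega : i + 2 ≤ n)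
  have hk' : (2 : ℝ) ≤ k := by exact_mod_cast hk
  obtain ⟨t₀, ht₀, hmin, hA⟩ :=
    exists_isMinOn_eval_sub_mul_eval_derivative_neg (by linarith) hke hk h h₁
  have hden : 0 < ((k : ℝ) - 1) * (k + n - 1) := by nlinarith
  simp only [Polynomial.deriv]
  exact strictAntiOn_sInf_image_add_mul isCompact_Icc q.continuousOn (by fun_prop) ht₀ hmin hA
    (div_nonneg (by linarith) hden.le) (div_nonneg (by linarith) hden.le)
    (div_lt_div_of_pos_right (by linarith) hden)

/-- For even `k ≥ 2`, setting
`Qⁿ_{k,i} = Pⁿₖ + ((n-1-i)/((k-1)(k+n-1)))·A₁Pⁿₖ` and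
`mⁿ_{k,i} = min_{[-1,1]} Qⁿ_{k,i}`, the sequence `(mⁿ_{k,i})_{i=1}^{n-1}` is
strictly increasing. -/
theorem min_Q_strict_mono (n k : ℕ) (hn : 3 ≤ n) (hk : 2 ≤ k) (hke : Even k)
    (P : ℝ → ℝ) (hP : IsLegendre n k P) :
    ∀ i : ℕ, 1 ≤ i → i + 1 ≤ n - 1 →
      sInf ((fun t => P t +
          (((n : ℝ) - 1 - (i : ℝ)) / (((k : ℝ) - 1) * ((k : ℝ) + (n : ℝ) - 1))) *
            (P t - t * deriv P t)) '' Set.Icc (-1 : ℝ) 1) <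
        sInf ((fun t => P t +
          (((n : ℝ) - 1 - ((i : ℝ) + 1)) / (((k : ℝ) - 1) * ((k : ℝ) + (n : ℝ) - 1))) *
            (P t - t * deriv P t)) '' Set.Icc (-1 : ℝ) 1) :=
  min_Q_strict_mono_general n k hk hke P hP
end

section
/- Let n ≥ 3 and let D^{n-1} be the (n-1)-dimensional unit disk in the hyperplane ē^⊥ ⊂ ℝⁿ. For 1 ≤ i < n-1, the i-th area measure of D^{n-1} has density s_i(v) = ((n-1-i)/(n-1))(1 - ⟨ē,v⟩²)^{-i/2} with respect to spherical Lebesgue measure, and its mass on the polar cap satisfies S_i(D^{n-1}, C_r(ē)) ≥ κ_{n-1}(sin r)^{n-1-i} for all r ∈ [0, π/2], where κ_{n-1} is the volume of the (n-1)-dimensional unit ball and C_r(ē) = {v : ⟨ē,v⟩ > cos r}. -/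
/-!
Since finite Borel measures on `ℝ` are determined by the integrals of bounded continuous
functions, the cylinder-coordinate formula identifies the pushforward of `σ` under
`v ↦ ⟨e, v⟩` with the measure `(n-1) κ_{n-1} (1 - t²)^{(n-3)/2} dt` on `(-1, 1)`. The cap mass
is therefore `(n-1-i) κ_{n-1} ∫_{cos r}^1 (1 - t²)^{(n-3-i)/2} dt`, and inserting the factor
`t ≤ 1` turns the integrand into an exact derivative, giving `κ_{n-1} (1 - cos² r)^{(n-1-i)/2}`.
-/

open MeasureTheory Set BoundedContinuousFunction

lemma hasDerivAt_one_sub_sq_rpow {q : ℝ} (hq : 0 < q) {t : ℝ} (ht : 1 - t ^ 2 ≠ 0) :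
    HasDerivAt (fun t : ℝ => -((1 - t ^ 2) ^ q / (2 * q))) (t * (1 - t ^ 2) ^ (q - 1)) t := by
  refine ((((hasDerivAt_pow 2 t).const_sub 1).rpow_const (Or.inl ht)).div_const (2 * q)).neg
    |>.congr_deriv ?_
  field_simp
  ring

lemma lintegral_Ioo_mul_one_sub_sq_rpow {a q : ℝ} (ha0 : 0 ≤ a) (ha1 : a ≤ 1) (hq : 0 < q) :
    ∫⁻ t in Ioo a 1, ENNReal.ofReal (t * (1 - t ^ 2) ^ (q - 1)) =
      ENNReal.ofReal ((1 - a ^ 2) ^ q / (2 * q)) := by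
  set F : ℝ → ℝ := fun t => -((1 - t ^ 2) ^ q / (2 * q))
  have hF : ContinuousOn F (Icc a 1) :=
    ((continuous_const.sub (continuous_pow 2)).rpow_const fun _ => Or.inr hq.le).div_const _
      |>.neg.continuousOn
  have hderiv : ∀ t ∈ Ioo a 1, HasDerivAt F (t * (1 - t ^ 2) ^ (q - 1)) t := fun t ht =>
    hasDerivAt_one_sub_sq_rpow hq (by nlinarith [ht.1, ht.2])
  have hnonneg : ∀ t ∈ Ioc a 1, 0 ≤ t * (1 - t ^ 2) ^ (q - 1) := fun t ht =>
    mul_nonneg (ha0.trans ht.1.le) (Real.rpow_nonneg (by nlinarith [ht.1, ht.2]) _)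
  have hint := intervalIntegral.integrableOn_deriv_of_nonneg hF hderiv
    fun t ht => hnonneg t (Ioo_subset_Ioc_self ht)
  rw [setLIntegral_congr Ioo_ae_eq_Ioc, ← ofReal_integral_eq_lintegral_ofReal hint
    ((ae_restrict_iff' measurableSet_Ioc).2 (.of_forall hnonneg)),
    ← intervalIntegral.integral_of_le ha1, intervalIntegral.integral_eq_sub_of_hasDerivAt_of_le
      ha1 hF hderiv ((intervalIntegrable_iff_integrableOn_Ioc_of_le ha1).2 hint)]
  simp [F, Real.zero_rpow hq.ne']

lemma integrableOn_one_sub_sq_rpow {p : ℝ} (hp : 0 ≤ p) :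
    IntegrableOn (fun t : ℝ => (1 - t ^ 2) ^ p) (Ioo (-1) 1) := by
  refine Measure.integrableOn_of_bounded (M := 1) (by simp) (by fun_prop) ?_
  filter_upwards [ae_restrict_mem measurableSet_Ioo] with t ht
  have hbase : 0 ≤ 1 - t ^ 2 := by nlinarith [ht.1, ht.2]
  rw [Real.norm_of_nonneg (Real.rpow_nonneg hbase _)]
  exact Real.rpow_le_one hbase (by nlinarith) hp

lemma map_eq_withDensity_of_integral_comp_eq {Ω : Type*} [MeasurableSpace Ω] {σ : Measure Ω}
    [IsFiniteMeasure σ] {g : Ω → ℝ} (hg : Measurable g) {s : Set ℝ} (hs : MeasurableSet s)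
    {w : ℝ → ℝ} (hw : IntegrableOn w s) (hw0 : ∀ t ∈ s, 0 ≤ w t)
    (h : ∀ f : ℝ →ᵇ ℝ, ∫ x, f (g x) ∂σ = ∫ t in s, f t * w t) :
    σ.map g = (volume.restrict s).withDensity fun t => ENNReal.ofReal (w t) := by
  have := isFiniteMeasure_withDensity_ofReal hw.2
  refine ext_of_forall_integral_eq_of_IsFiniteMeasure fun f => ?_
  rw [integral_map hg.aemeasurable f.continuous.aestronglyMeasurable, h,
    integral_withDensity_eq_integral_toReal_smul₀ hw.aemeasurable.ennreal_ofReal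
      (.of_forall fun _ => ENNReal.ofReal_lt_top)]
  refine setIntegral_congr_fun hs fun t ht => ?_
  simp [ENNReal.toReal_ofReal (hw0 t ht), mul_comm]

lemma map_eq_withDensity_one_sub_sq_rpow {Ω : Type*} [MeasurableSpace Ω] {σ : Measure Ω}
    [IsFiniteMeasure σ] {g : Ω → ℝ} (hg : Measurable g) {C p : ℝ} (hC : 0 ≤ C) (hp : 0 ≤ p)
    (h : ∀ f : ℝ → ℝ, Continuous f →
      ∫ x, f (g x) ∂σ = C * ∫ t in Ioo (-1) 1, f t * (1 - t ^ 2) ^ p) :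
    σ.map g = (volume.restrict (Ioo (-1) 1)).withDensity
      fun t => ENNReal.ofReal (C * (1 - t ^ 2) ^ p) := by
  refine map_eq_withDensity_of_integral_comp_eq hg measurableSet_Ioo
    ((integrableOn_one_sub_sq_rpow hp).const_mul C) (fun t ht => ?_) fun f => ?_
  · exact mul_nonneg hC (Real.rpow_nonneg (by nlinarith [ht.1, ht.2]) _)
  · rw [h f f.continuous, ← integral_const_mul]
    simp only [mul_left_comm]

lemma withDensity_comp_apply_eq_setLIntegral_map {Ω : Type*} [MeasurableSpace Ω]
    {σ : Measure Ω} [SFinite σ] {g : Ω → ℝ} (hg : Measurable g) {F : ℝ → ENNReal}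
    (hF : Measurable F) {s : Set ℝ} (hs : MeasurableSet s) {A : Set Ω} (hA : A =ᵐ[σ] g ⁻¹' s) :
    σ.withDensity (fun x => F (g x)) A = ∫⁻ t in s, F t ∂σ.map g := by
  rw [withDensity_apply' _, setLIntegral_congr hA, setLIntegral_map hs hF hg]

lemma le_setLIntegral_Ioi_withDensity_one_sub_sq_rpow {a c C p p' q : ℝ} (ha0 : 0 ≤ a)
    (ha1 : a ≤ 1) (hc : 0 ≤ c) (hC : 0 ≤ C) (hq : 0 < q) (hpq : p + p' = q - 1) :
    ENNReal.ofReal (c * C / (2 * q) * (1 - a ^ 2) ^ q) ≤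
      ∫⁻ t in Ioi a, ENNReal.ofReal (c * (1 - t ^ 2) ^ p')
        ∂(volume.restrict (Ioo (-1) 1)).withDensity
          fun t => ENNReal.ofReal (C * (1 - t ^ 2) ^ p) := by
  rw [setLIntegral_withDensity_eq_setLIntegral_mul _ (by fun_prop) (by fun_prop) measurableSet_Ioi,
    Measure.restrict_restrict measurableSet_Ioi]
  calc ENNReal.ofReal (c * C / (2 * q) * (1 - a ^ 2) ^ q)
      = ENNReal.ofReal (c * C) *
          ∫⁻ t in Ioo a 1, ENNReal.ofReal (t * (1 - t ^ 2) ^ (q - 1)) := by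
        rw [lintegral_Ioo_mul_one_sub_sq_rpow ha0 ha1 hq, ← ENNReal.ofReal_mul (mul_nonneg hc hC)]
        ring_nf
    _ = ∫⁻ t in Ioo a 1, ENNReal.ofReal (c * C * (t * (1 - t ^ 2) ^ (q - 1))) := by
        rw [← lintegral_const_mul' _ _ ENNReal.ofReal_ne_top]
        simp only [ENNReal.ofReal_mul (mul_nonneg hc hC)]
    _ ≤ ∫⁻ t in Ioo a 1,
          ENNReal.ofReal (C * (1 - t ^ 2) ^ p) * ENNReal.ofReal (c * (1 - t ^ 2) ^ p') := by
        refine setLIntegral_mono' measurableSet_Ioo fun t ht => ?_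
        have hpos : 0 < 1 - t ^ 2 := by nlinarith [ht.1, ht.2]
        rw [← ENNReal.ofReal_mul (mul_nonneg hC (Real.rpow_nonneg hpos.le _))]
        refine ENNReal.ofReal_le_ofReal ?_
        calc c * C * (t * (1 - t ^ 2) ^ (q - 1))
            ≤ c * C * (1 * (1 - t ^ 2) ^ (q - 1)) := by gcongr; exact ht.2.le
          _ = C * (1 - t ^ 2) ^ p * (c * (1 - t ^ 2) ^ p') := by
            rw [← hpq, Real.rpow_add hpos]
            ring
    _ ≤ _ := lintegral_mono_set fun t ht => by exact ⟨ht.1, by linarith [ht.1], ht.2⟩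

lemma one_sub_cos_sq_rpow_half {r : ℝ} (hr : 0 ≤ Real.sin r) (m : ℕ) :
    (1 - Real.cos r ^ 2) ^ ((m : ℝ) / 2) = Real.sin r ^ m := by
  rw [← Real.sin_sq, ← Real.rpow_natCast (Real.sin r) 2, ← Real.rpow_mul hr, Nat.cast_ofNat,
    mul_div_cancel₀ _ two_ne_zero, Real.rpow_natCast]

theorem disk_area_measure_cap_bound_general (n : ℕ) (hn : 3 ≤ n) (i : ℕ)
    (hi2 : i < n - 1)
    (e : EuclideanSpace ℝ (Fin n))
    (σ : Measure (EuclideanSpace ℝ (Fin n))) [IsFiniteMeasure σ]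
    (hσs : σ (Metric.sphere (0 : EuclideanSpace ℝ (Fin n)) 1)ᶜ = 0)
    (hσ : ∀ h : ℝ → ℝ, Continuous h →
      ∫ u, h ((inner ℝ e u : ℝ)) ∂σ =
        (((n : ℝ) - 1) * (volume (Metric.ball (0 : EuclideanSpace ℝ (Fin (n - 1))) 1)).toReal) *
          ∫ t in Set.Ioo (-1 : ℝ) 1, h t * (1 - t ^ 2) ^ (((n : ℝ) - 3) / 2)) :
    ∀ r ∈ Set.Icc (0 : ℝ) (Real.pi / 2),
      ENNReal.ofReal
          ((volume (Metric.ball (0 : EuclideanSpace ℝ (Fin (n - 1))) 1)).toReal *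
            Real.sin r ^ (n - 1 - i)) ≤
        (σ.withDensity fun v => ENNReal.ofReal
            ((((n : ℝ) - 1 - (i : ℝ)) / ((n : ℝ) - 1)) *
              (1 - (inner ℝ e v : ℝ) ^ 2) ^ (-(i : ℝ) / 2)))
          {v | v ∈ Metric.sphere (0 : EuclideanSpace ℝ (Fin n)) 1 ∧
            Real.cos r < (inner ℝ e v : ℝ)} := by
  intro r hr
  set κ := (volume (Metric.ball (0 : EuclideanSpace ℝ (Fin (n - 1))) 1)).toReal
  set m := n - 1 - i
  have hn3 : (3 : ℝ) ≤ n := by exact_mod_cast hn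
  have hm1 : (1 : ℝ) ≤ m := by exact_mod_cast (by omega : 1 ≤ m)
  have hm : (m : ℝ) = n - 1 - i := by
    rw [Nat.cast_sub (by omega), Nat.cast_sub (by omega), Nat.cast_one]
  have hC : 0 ≤ ((n : ℝ) - 1) * κ := mul_nonneg (by linarith) ENNReal.toReal_nonneg
  have hg : Measurable fun v : EuclideanSpace ℝ (Fin n) => inner ℝ e v :=
    (continuous_const.inner continuous_id).measurable
  have hcap : {v | v ∈ Metric.sphere (0 : EuclideanSpace ℝ (Fin n)) 1 ∧ Real.cos r < inner ℝ e v}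
      =ᵐ[σ] (fun v => inner ℝ e v) ⁻¹' Ioi (Real.cos r) :=
    inter_ae_eq_right_of_ae_eq_univ (ae_eq_univ.2 hσs)
  rw [withDensity_comp_apply_eq_setLIntegral_map hg (by fun_prop) measurableSet_Ioi hcap
      (F := fun t => ENNReal.ofReal ((n - 1 - i) / (n - 1) * (1 - t ^ 2) ^ (-(i : ℝ) / 2))),
    map_eq_withDensity_one_sub_sq_rpow hg hC (by linarith) hσ]
  refine le_trans (le_of_eq ?_) (le_setLIntegral_Ioi_withDensity_one_sub_sq_rpow
    (p := ((n : ℝ) - 3) / 2) (p' := -(i : ℝ) / 2) (q := (m : ℝ) / 2)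
    (Real.cos_nonneg_of_mem_Icc ⟨by linarith [hr.1, Real.pi_pos], hr.2⟩) (Real.cos_le_one r)
    (div_nonneg (by linarith) (by linarith)) hC (by positivity) (by rw [hm]; ring))
  have hn1 : (n : ℝ) - 1 ≠ 0 := by linarith
  rw [one_sub_cos_sq_rpow_half (Real.sin_nonneg_of_nonneg_of_le_pi hr.1
    (by linarith [hr.2, Real.pi_pos])), ← hm]
  field_simp

/-- The mass of polar caps of the `i`-th area measure of the `(n-1)`-dimensional unit disk
`D^{n-1} ⊂ e^⊥`. Here `σ` is the spherical Lebesgue measure on `S^{n-1}` (characterized on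
zonal functions by the cylinder-coordinate formula with `ω_{n-1} = (n-1)κ_{n-1}` the surface
area of `S^{n-2}`), and the `i`-th area measure of `D^{n-1}` is the measure with density
`s_i(v) = ((n-1-i)/(n-1))(1-⟨e,v⟩²)^{-i/2}` with respect to `σ` (for `1 ≤ i < n-1`). Its
mass on the polar cap `C_r(e)` is at least `κ_{n-1}(sin r)^{n-1-i}` for `r ∈ [0, π/2]`. -/
theorem disk_area_measure_cap_bound (n : ℕ) (hn : 3 ≤ n) (i : ℕ) (hi1 : 1 ≤ i)
    (hi2 : i < n - 1)
    (e : EuclideanSpace ℝ (Fin n)) (he : ‖e‖ = 1)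
    (σ : Measure (EuclideanSpace ℝ (Fin n))) [IsFiniteMeasure σ]
    (hσs : σ (Metric.sphere (0 : EuclideanSpace ℝ (Fin n)) 1)ᶜ = 0)
    (hσ : ∀ h : ℝ → ℝ, Continuous h →
      ∫ u, h ((inner ℝ e u : ℝ)) ∂σ =
        (((n : ℝ) - 1) * (volume (Metric.ball (0 : EuclideanSpace ℝ (Fin (n - 1))) 1)).toReal) *
          ∫ t in Set.Ioo (-1 : ℝ) 1, h t * (1 - t ^ 2) ^ (((n : ℝ) - 3) / 2)) :
    ∀ r ∈ Set.Icc (0 : ℝ) (Real.pi / 2),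
      ENNReal.ofReal
          ((volume (Metric.ball (0 : EuclideanSpace ℝ (Fin (n - 1))) 1)).toReal *
            Real.sin r ^ (n - 1 - i)) ≤
        (σ.withDensity fun v => ENNReal.ofReal
            ((((n : ℝ) - 1 - (i : ℝ)) / ((n : ℝ) - 1)) *
              (1 - (inner ℝ e v : ℝ) ^ 2) ^ (-(i : ℝ) / 2)))
          {v | v ∈ Metric.sphere (0 : EuclideanSpace ℝ (Fin n)) 1 ∧
            Real.cos r < (inner ℝ e v : ℝ)} :=
  disk_area_measure_cap_bound_general n hn i hi2 e σ hσs hσ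
end
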